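/- Let Y be a real normed space, K ⊆ Y a closed convex cone, A ⊆ Y a K-sequentially compact set, and D ⊆ Y a set such that A ⊆ D + (Y \ −K). Then there exists ε > 0 such that A + B(0, ε) ⊆ D + (Y \ −K). -/

import Mathlib

/-! Since `K` is a closed convex cone, `U := D + (-K)ᶜ` is open and `U + K ⊆ U`. If no `ε` worked,
there would be `aₙ ∈ A` and `bₙ → 0` with `aₙ + bₙ ∉ U`. Compactness gives `cₙ ∈ K` and a
subsequence along which `aₙ - cₙ + bₙ` tends to a point of `A ⊆ U`; so eventually
`aₙ - cₙ + bₙ ∈ U`, and adding `cₙ ∈ K` gives `aₙ + bₙ ∈ U`. -/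

open Pointwise

def KSeqCompact {Y : Type*} [NormedAddCommGroup Y] (K A : Set Y) : Prop :=
  ∀ a : ℕ → Y, (∀ n, a n ∈ A) → ∃ c : ℕ → Y, (∀ n, c n ∈ K) ∧
    ∃ φ : ℕ → ℕ, StrictMono φ ∧ ∃ l ∈ A,
      Filter.Tendsto (fun n => a (φ n) - c (φ n)) Filter.atTop (nhds l)

open Filter Topology Metric

theorem add_subset_of_convex_of_smul_mem {Y : Type*} [AddCommGroup Y] [Module ℝ Y] {K : Set Y}
    (hKconv : Convex ℝ K)
    (hKcone : ∀ c : ℝ, 0 ≤ c → ∀ k ∈ K, c • k ∈ K) : K + K ⊆ K := by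
  rintro _ ⟨k₁, hk₁, k₂, hk₂, rfl⟩
  have hmid := hKconv hk₁ hk₂ (by norm_num : (0:ℝ) ≤ 1/2) (by norm_num : (0:ℝ) ≤ 1/2)
    (by norm_num)
  have hdouble : (2:ℝ) • ((1/2:ℝ) • k₁ + (1/2:ℝ) • k₂) = k₁ + k₂ := by
    rw [smul_add, smul_smul, smul_smul]; norm_num
  simpa only [hdouble] using hKcone 2 (by norm_num) _ hmid

theorem compl_neg_add_subset {Y : Type*} [AddCommGroup Y] {K : Set Y} (hK : K + K ⊆ K) :
    (-K)ᶜ + K ⊆ (-K)ᶜ := by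
  rintro _ ⟨x, hx, k, hk, rfl⟩ hxk
  apply hx
  rw [Set.mem_neg] at hxk ⊢
  simpa using hK (Set.add_mem_add hxk hk)

section SeqCompact

variable {Y : Type*} [NormedAddCommGroup Y] {K A U : Set Y}

theorem KSeqCompact.exists_add_mem (hA : KSeqCompact K A) (hU : IsOpen U) (hUK : U + K ⊆ U)
    (hAU : A ⊆ U) {a b : ℕ → Y} (ha : ∀ n, a n ∈ A) (hb : Tendsto b atTop (𝓝 0)) :
    ∃ n, a n + b n ∈ U := by
  obtain ⟨c, hc, φ, hφ, l, hlA, hlim⟩ := hA a ha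
  have hconv : Tendsto (fun n => a (φ n) - c (φ n) + b (φ n)) atTop (𝓝 l) := by
    simpa using hlim.add (hb.comp hφ.tendsto_atTop)
  obtain ⟨n, hn⟩ := (hconv.eventually (hU.mem_nhds (hAU hlA))).exists
  refine ⟨φ n, ?_⟩
  have hshift := hUK (Set.add_mem_add hn (hc (φ n)))
  rwa [sub_add_eq_add_sub, sub_add_cancel] at hshift

theorem KSeqCompact.exists_add_ball_subset (hA : KSeqCompact K A) (hU : IsOpen U)
    (hUK : U + K ⊆ U) (hAU : A ⊆ U) : ∃ ε > (0:ℝ), A + ball (0:Y) ε ⊆ U := by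
  by_contra! hcon
  have hbad : ∀ n : ℕ, ∃ a ∈ A, ∃ b ∈ ball (0:Y) (1 / (n + 1)), a + b ∉ U := by
    intro n
    obtain ⟨_, ⟨a, ha, b, hb, rfl⟩, hab⟩ := Set.not_subset.mp (hcon _ Nat.one_div_pos_of_nat)
    exact ⟨a, ha, b, hb, hab⟩
  choose a ha b hb hab using hbad
  have hb0 : Tendsto b atTop (𝓝 0) :=
    squeeze_zero_norm (fun n => (mem_ball_zero_iff.mp (hb n)).le)
      tendsto_one_div_add_atTop_nhds_zero_nat
  obtain ⟨n, hn⟩ := hA.exists_add_mem hU hUK hAU ha hb0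
  exact hab n hn

end SeqCompact

theorem stmt17 {Y : Type*} [NormedAddCommGroup Y] [NormedSpace ℝ Y]
    (K : Set Y) (hKclosed : IsClosed K) (hKconv : Convex ℝ K)
    (hKcone : ∀ c : ℝ, 0 ≤ c → ∀ k ∈ K, c • k ∈ K)
    (A D : Set Y) (hA : KSeqCompact K A)
    (h : A ⊆ D + (-K)ᶜ) :
    ∃ ε > (0:ℝ), A + Metric.ball (0:Y) ε ⊆ D + (-K)ᶜ := by
  have hopen : IsOpen (D + (-K)ᶜ) := hKclosed.neg.isOpen_compl.add_left
  have hinvariant : D + (-K)ᶜ + K ⊆ D + (-K)ᶜ := by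
    rw [add_assoc]
    exact Set.add_subset_add_left
      (compl_neg_add_subset (add_subset_of_convex_of_smul_mem hKconv hKcone))
  exact hA.exists_add_ball_subset hopen hinvariant h
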